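/- Let 1 ≤ q < ∞, a, b > -1, and suppose γ = α + β - a + (b+1)/q and β + 1 - γ < a + 1 < β + 1. Then H_{α,β,γ} is bounded from L¹((0,∞), y^a dy) to L^q((0,∞), y^b dy). -/

import Mathlib

open MeasureTheory Set ENNReal

/-- The measure `x^a dx` on `(0,∞)`. -/
noncomputable def wMeasure (a : ℝ) : Measure ℝ :=
  (volume.restrict (Ioi (0:ℝ))).withDensity (fun x => ENNReal.ofReal (x ^ a))

/-- The Hilbert-type operator `H_{α,β,γ} f(x) = x^α ∫₀^∞ f(y) y^β/(x+y)^γ dy`. -/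
noncomputable def Hop (α β γ : ℝ) (f : ℝ → ℝ) : ℝ → ℝ :=
  fun x => x ^ α * ∫ y in Ioi (0:ℝ), f y * y ^ β / (x + y) ^ γ

/-!
By Minkowski's integral inequality, `‖H f‖_{L^q(x^b dx)} ≤ ∫₀^∞ |f y| ‖K(·, y)‖_{L^q(x^b dx)} dy`
with `K(x, y) = x^α y^β / (x + y)^γ`. The relation between `γ` and the other exponents makes
`K(x, y)^q x^b` homogeneous of degree `a q - 1`, so the substitution `x = y t` gives
`‖K(·, y)‖_{L^q(x^b dx)} = C y^a` with `C^q = ∫₀^∞ t^(α q + b) (1 + t)^(-γ q) dt`, and the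
conditions `β + 1 - γ < a + 1 < β + 1` are exactly those making this Beta-type integral converge.
-/

open Filter Topology Function

theorem ENNReal.rpow_le_of_le_rpow_sub_mul {J C : ℝ≥0∞} {θ : ℝ} (hθ : 0 < θ) (hJ : J ≠ ⊤)
    (h : J ≤ J ^ (1 - θ) * C) : J ^ θ ≤ C := by
  rcases eq_or_ne J 0 with rfl | hJ0
  · simp [ENNReal.zero_rpow_of_pos hθ]
  have hsplit : J = J ^ θ * J ^ (1 - θ) := by
    rw [← ENNReal.rpow_add _ _ hJ0 hJ, add_sub_cancel, ENNReal.rpow_one]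
  have hne0 : J ^ (1 - θ) ≠ 0 := (ENNReal.rpow_pos (pos_iff_ne_zero.2 hJ0) hJ).ne'
  have hnetop : J ^ (1 - θ) ≠ ⊤ := ENNReal.rpow_ne_top_of_ne_zero hJ0 hJ
  nth_rewrite 1 [hsplit] at h
  rw [mul_comm _ C] at h
  exact (ENNReal.mul_le_mul_iff_left hne0 hnetop).1 h

theorem ENNReal.lintegral_const_mul_rpow_one_div {X : Type*} [MeasurableSpace X] (μ : Measure X)
    {c : ℝ≥0∞} (hc : c ≠ ⊤) (g : X → ℝ≥0∞) {p : ℝ} (hp : 0 < p) :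
    (∫⁻ x, (c * g x) ^ p ∂μ) ^ (1 / p) = c * (∫⁻ x, g x ^ p ∂μ) ^ (1 / p) := by
  simp_rw [ENNReal.mul_rpow_of_nonneg _ _ hp.le]
  rw [lintegral_const_mul' _ _ (rpow_ne_top_of_nonneg hp.le hc),
    ENNReal.mul_rpow_of_nonneg _ _ (by positivity), ← ENNReal.rpow_mul,
    mul_one_div_cancel hp.ne', ENNReal.rpow_one]

section Minkowski

variable {X Y : Type*} [MeasurableSpace X] [MeasurableSpace Y] {μ : Measure X} {ν : Measure Y}
  [SFinite ν] {G : X → Y → ℝ≥0∞}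

theorem ENNReal.lintegral_Lp_lintegral_le_of_le [SFinite μ] (hG : Measurable (uncurry G))
    {p : ℝ} (hp : 1 < p) {H : X → ℝ≥0∞} (hH : Measurable H)
    (hHG : ∀ x, H x ≤ ∫⁻ y, G x y ∂ν) (hfin : ∫⁻ x, H x ^ p ∂μ ≠ ⊤) :
    (∫⁻ x, H x ^ p ∂μ) ^ (1 / p) ≤ ∫⁻ y, (∫⁻ x, G x y ^ p ∂μ) ^ (1 / p) ∂ν := by
  set J := ∫⁻ x, H x ^ p ∂μ
  have hpq : p.HolderConjugate p.conjExponent := Real.HolderConjugate.conjExponent hp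
  have hθ : 1 - 1 / p = 1 / p.conjExponent := by simpa only [one_div] using hpq.one_sub_inv
  have hpow : ∀ x, (H x ^ (p - 1)) ^ p.conjExponent = H x ^ p := fun x => by
    rw [← ENNReal.rpow_mul, hpq.sub_one_mul_conj]
  refine ENNReal.rpow_le_of_le_rpow_sub_mul (by positivity) hfin ?_
  calc J = ∫⁻ x, H x ^ (p - 1) * H x ∂μ := lintegral_congr fun x => by
        conv_lhs => rw [← sub_add_cancel p 1]
        rw [ENNReal.rpow_add_of_nonneg _ _ (by linarith) zero_le_one, ENNReal.rpow_one]
    _ ≤ ∫⁻ x, H x ^ (p - 1) * ∫⁻ y, G x y ∂ν ∂μ := lintegral_mono fun x => by gcongr; exact hHG x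
    _ = ∫⁻ x, ∫⁻ y, H x ^ (p - 1) * G x y ∂ν ∂μ := lintegral_congr fun x =>
        (lintegral_const_mul _ (hG.comp measurable_prodMk_left)).symm
    _ = ∫⁻ y, ∫⁻ x, H x ^ (p - 1) * G x y ∂μ ∂ν :=
        lintegral_lintegral_swap (((hH.pow_const _).comp measurable_fst).mul hG).aemeasurable
    _ ≤ ∫⁻ y, J ^ (1 - 1 / p) * (∫⁻ x, G x y ^ p ∂μ) ^ (1 / p) ∂ν := lintegral_mono fun y => by
        calc ∫⁻ x, H x ^ (p - 1) * G x y ∂μ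
            ≤ (∫⁻ x, (H x ^ (p - 1)) ^ p.conjExponent ∂μ) ^ (1 / p.conjExponent)
                * (∫⁻ x, G x y ^ p ∂μ) ^ (1 / p) :=
              ENNReal.lintegral_mul_le_Lp_mul_Lq μ hpq.symm (hH.pow_const _).aemeasurable
                (hG.comp measurable_prodMk_right).aemeasurable
          _ = _ := by rw [lintegral_congr hpow, hθ]
    _ = J ^ (1 - 1 / p) * ∫⁻ y, (∫⁻ x, G x y ^ p ∂μ) ^ (1 / p) ∂ν :=
        lintegral_const_mul' _ _ (ENNReal.rpow_ne_top_of_nonneg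
          (hθ ▸ one_div_nonneg.2 hpq.symm.nonneg) hfin)

theorem ENNReal.lintegral_Lp_lintegral_le [SigmaFinite μ] (hG : Measurable (uncurry G))
    {p : ℝ} (hp : 1 ≤ p) :
    (∫⁻ x, (∫⁻ y, G x y ∂ν) ^ p ∂μ) ^ (1 / p) ≤ ∫⁻ y, (∫⁻ x, G x y ^ p ∂μ) ^ (1 / p) ∂ν := by
  rcases hp.eq_or_lt with rfl | hp_lt
  · simpa only [ENNReal.rpow_one, div_one] using (lintegral_lintegral_swap hG.aemeasurable).le
  set Φ : X → ℝ≥0∞ := fun x => ∫⁻ y, G x y ∂ν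
  have hp0 : 0 < p := by linarith
  -- `∫⁻ Φ ^ p` may be infinite: apply the finite case to truncations of `Φ`, then use Fatou.
  set H : ℕ → X → ℝ≥0∞ := fun n => (spanningSets μ n).indicator fun x => min (Φ x) n
  have hH_meas (n : ℕ) : Measurable (H n) :=
    (hG.lintegral_prod_right'.min measurable_const).indicator (measurableSet_spanningSets μ n)
  have hH_le (n : ℕ) (x : X) : H n x ≤ Φ x :=
    Set.indicator_le' (fun _ _ => min_le_left _ _) (fun _ _ => zero_le) x
  have hH_fin (n : ℕ) : ∫⁻ x, H n x ^ p ∂μ ≠ ⊤ := by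
    refine ne_top_of_le_ne_top ?_ (lintegral_mono (g := (spanningSets μ n).indicator
      fun _ => (n : ℝ≥0∞) ^ p) fun x => ?_)
    · rw [lintegral_indicator_const (measurableSet_spanningSets μ n)]
      exact ENNReal.mul_ne_top (ENNReal.rpow_ne_top_of_nonneg hp0.le (natCast_ne_top n))
        (measure_spanningSets_lt_top μ n).ne
    · by_cases hx : x ∈ spanningSets μ n
      · simpa [H, hx] using ENNReal.rpow_le_rpow (min_le_right (Φ x) n) hp0.le
      · simp [H, hx, ENNReal.zero_rpow_of_pos hp0]
  have hH_lim (x : X) : Tendsto (fun n => H n x ^ p) atTop (𝓝 (Φ x ^ p)) := by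
    have hmin : Tendsto (fun n : ℕ => min (Φ x) n) atTop (𝓝 (Φ x)) := by
      simpa using tendsto_const_nhds.min ENNReal.tendsto_nat_nhds_top
    refine (ENNReal.continuous_rpow_const.tendsto _).comp (hmin.congr' ?_)
    filter_upwards [eventually_mem_spanningSets μ x] with n hn
    simp [H, hn]
  rw [one_div, ENNReal.rpow_inv_le_iff hp0]
  calc ∫⁻ x, Φ x ^ p ∂μ = ∫⁻ x, liminf (fun n => H n x ^ p) atTop ∂μ :=
        lintegral_congr fun x => (hH_lim x).liminf_eq.symm
    _ ≤ liminf (fun n => ∫⁻ x, H n x ^ p ∂μ) atTop :=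
        lintegral_liminf_le fun n => (hH_meas n).pow_const p
    _ ≤ _ := liminf_le_of_frequently_le' <| Frequently.of_forall fun n => by
        rw [← ENNReal.rpow_inv_le_iff hp0, ← one_div]
        exact ENNReal.lintegral_Lp_lintegral_le_of_le hG hp_lt (hH_meas n) (hH_le n) (hH_fin n)

end Minkowski

lemma integrableOn_rpow_mul_one_add_rpow_neg {s r : ℝ} (hs : -1 < s) (hsr : s + 1 < r) :
    IntegrableOn (fun t : ℝ => t ^ s * (1 + t) ^ (-r)) (Ioi 0) := by
  have hmeas : Measurable (fun t : ℝ => t ^ s * (1 + t) ^ (-r)) := by fun_prop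
  have h01 : IntegrableOn (fun t : ℝ => t ^ s * (1 + t) ^ (-r)) (Ioc 0 1) := by
    have hint : IntegrableOn (fun t : ℝ => t ^ s) (Ioc 0 1) :=
      (intervalIntegrable_iff_integrableOn_Ioc_of_le zero_le_one).1
        (intervalIntegral.intervalIntegrable_rpow' hs)
    refine hint.mono' hmeas.aestronglyMeasurable <|
      (ae_restrict_iff' measurableSet_Ioc).2 (ae_of_all _ fun t ht => ?_)
    rw [Real.norm_of_nonneg (by have := ht.1; positivity)]
    exact mul_le_of_le_one_right (by have := ht.1; positivity)
      (Real.rpow_le_one_of_one_le_of_nonpos (by linarith [ht.1]) (by linarith))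
  have h1i : IntegrableOn (fun t : ℝ => t ^ s * (1 + t) ^ (-r)) (Ioi 1) := by
    refine (integrableOn_Ioi_rpow_of_lt (show s - r < -1 by linarith) one_pos).mono'
      hmeas.aestronglyMeasurable <|
      (ae_restrict_iff' measurableSet_Ioi).2 (ae_of_all _ fun t (ht : 1 < t) => ?_)
    have ht0 : 0 < t := one_pos.trans ht
    rw [Real.norm_of_nonneg (by positivity), sub_eq_add_neg, Real.rpow_add ht0]
    exact mul_le_mul_of_nonneg_left
      (Real.rpow_le_rpow_of_nonpos ht0 (by linarith) (by linarith)) (by positivity)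
  rw [← Ioc_union_Ioi_eq_Ioi zero_le_one]
  exact h01.union h1i

instance (a : ℝ) : SigmaFinite (wMeasure a) :=
  SigmaFinite.withDensity_of_ne_top' fun _ => ofReal_ne_top

lemma lintegral_wMeasure (a : ℝ) (g : ℝ → ℝ≥0∞) :
    ∫⁻ x, g x ∂wMeasure a = ∫⁻ x in Ioi 0, ENNReal.ofReal (x ^ a) * g x :=
  lintegral_withDensity_eq_lintegral_mul_non_measurable _
    (measurable_id.pow_const a).ennreal_ofReal (ae_of_all _ fun _ => ofReal_lt_top) g

lemma enorm_Hop_le (α β γ : ℝ) (f : ℝ → ℝ) (x : ℝ) :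
    ‖Hop α β γ f x‖ₑ ≤ ∫⁻ y in Ioi 0, ‖f y‖ₑ * ‖x ^ α * (y ^ β / (x + y) ^ γ)‖ₑ := by
  calc ‖Hop α β γ f x‖ₑ = ‖x ^ α‖ₑ * ‖∫ y in Ioi 0, f y * y ^ β / (x + y) ^ γ‖ₑ := enorm_mul _ _
    _ ≤ ‖x ^ α‖ₑ * ∫⁻ y in Ioi 0, ‖f y * y ^ β / (x + y) ^ γ‖ₑ := by
        gcongr; exact enorm_integral_le_lintegral_enorm _
    _ = ∫⁻ y in Ioi 0, ‖x ^ α‖ₑ * ‖f y * y ^ β / (x + y) ^ γ‖ₑ :=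
        (lintegral_const_mul' _ _ enorm_ne_top).symm
    _ = _ := lintegral_congr fun y => by
        rw [← enorm_mul, ← enorm_mul]
        ring_nf

lemma kernel_rpow_mul_rpow_eq {α β γ a b q : ℝ} (e : γ * q = (α + β - a) * q + b + 1)
    {x y : ℝ} (hx : 0 < x) (hy : 0 < y) :
    (x ^ α * (y ^ β / (x + y) ^ γ)) ^ q * x ^ b
      = y ^ (a * q - 1) * ((y⁻¹ * x) ^ (α * q + b) * (1 + y⁻¹ * x) ^ (-(γ * q))) := by
  have hxy : 0 < x + y := by linarith
  have h2 : (1:ℝ) + y⁻¹ * x = (x + y) / y := by field_simp; ring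
  have l1 : x ^ α * (y ^ β / (x + y) ^ γ)
      = Real.exp (Real.log x * α + (Real.log y * β - Real.log (x + y) * γ)) := by
    rw [Real.rpow_def_of_pos hx, Real.rpow_def_of_pos hy, Real.rpow_def_of_pos hxy,
      ← Real.exp_sub, ← Real.exp_add]
  have l3 : Real.log (y⁻¹ * x) = Real.log x - Real.log y := by
    rw [Real.log_mul (inv_ne_zero hy.ne') hx.ne', Real.log_inv]; ring
  have l4 : Real.log ((x + y) / y) = Real.log (x + y) - Real.log y :=
    Real.log_div hxy.ne' hy.ne'
  rw [l1, ← Real.exp_mul, Real.rpow_def_of_pos hx, Real.rpow_def_of_pos hy,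
    Real.rpow_def_of_pos (by positivity : (0:ℝ) < y⁻¹ * x), h2,
    Real.rpow_def_of_pos (by positivity : (0:ℝ) < (x + y) / y), l3, l4,
    ← Real.exp_add, ← Real.exp_add, ← Real.exp_add, Real.exp_eq_exp]
  linear_combination (-Real.log y) * e

lemma lintegral_enorm_kernel_rpow_wMeasure {α β γ a b q : ℝ} (hq : 0 < q)
    (e : γ * q = (α + β - a) * q + b + 1) (hs : -1 < α * q + b) (hsr : α * q + b + 1 < γ * q)
    {y : ℝ} (hy : 0 < y) :
    (∫⁻ x, ‖x ^ α * (y ^ β / (x + y) ^ γ)‖ₑ ^ q ∂wMeasure b) ^ (1 / q)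
      = ENNReal.ofReal (∫ t in Ioi 0, t ^ (α * q + b) * (1 + t) ^ (-(γ * q))) ^ (1 / q)
        * ENNReal.ofReal (y ^ a) := by
  set m : ℝ → ℝ := fun t => t ^ (α * q + b) * (1 + t) ^ (-(γ * q))
  have hm_scaled : IntegrableOn (fun x => m (y⁻¹ * x)) (Ioi 0) := by
    have h := integrableOn_Ioi_comp_mul_left_iff m 0 (inv_pos.2 hy)
    rw [mul_zero] at h
    exact h.2 (integrableOn_rpow_mul_one_add_rpow_neg hs hsr)
  have hpt : ∀ x ∈ Ioi (0:ℝ), ENNReal.ofReal (x ^ b) * ‖x ^ α * (y ^ β / (x + y) ^ γ)‖ₑ ^ q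
      = ENNReal.ofReal (y ^ (a * q - 1) * m (y⁻¹ * x)) := fun x (hx : 0 < x) => by
    rw [Real.enorm_of_nonneg (by positivity), ENNReal.ofReal_rpow_of_nonneg (by positivity) hq.le,
      ← ENNReal.ofReal_mul (by positivity), mul_comm, kernel_rpow_mul_rpow_eq e hx hy]
  have hint : ∫ x in Ioi 0, y ^ (a * q - 1) * m (y⁻¹ * x) = y ^ (a * q) * ∫ t in Ioi 0, m t := by
    rw [integral_const_mul, integral_comp_mul_left_Ioi m 0 (inv_pos.2 hy), mul_zero, inv_inv,
      smul_eq_mul, ← mul_assoc, ← Real.rpow_add_one hy.ne', sub_add_cancel]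
  have hnonneg : 0 ≤ᵐ[volume.restrict (Ioi 0)] fun x => y ^ (a * q - 1) * m (y⁻¹ * x) :=
    (ae_restrict_iff' measurableSet_Ioi).2 (ae_of_all _ fun x (hx : 0 < x) => by
      simp only [m, Pi.zero_apply]; positivity)
  rw [lintegral_wMeasure, setLIntegral_congr_fun measurableSet_Ioi hpt,
    ← ofReal_integral_eq_lintegral_ofReal (hm_scaled.const_mul _) hnonneg, hint,
    ENNReal.ofReal_mul (by positivity), ENNReal.mul_rpow_of_nonneg _ _ (by positivity),
    ENNReal.ofReal_rpow_of_pos (by positivity), ← Real.rpow_mul hy.le,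
    mul_assoc, mul_one_div_cancel hq.ne', mul_one, mul_comm]

theorem stmt_10_general (a b q α β γ : ℝ) (hq : 1 ≤ q)
    (hγ : γ = α + β - a + (b + 1) / q)
    (h1 : β + 1 - γ < a + 1) (h2 : a + 1 < β + 1) :
    ∃ C : ℝ≥0∞, C ≠ ⊤ ∧ ∀ f : ℝ → ℝ, Measurable f →
      eLpNorm (Hop α β γ f) (ENNReal.ofReal q) (wMeasure b)
        ≤ C * eLpNorm f 1 (wMeasure a) := by
  have hq0 : 0 < q := by linarith
  have e : γ * q = (α + β - a) * q + b + 1 := by rw [hγ]; field_simp; ring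
  have hs : -1 < α * q + b := by nlinarith
  have hsr : α * q + b + 1 < γ * q := by nlinarith
  set C := ENNReal.ofReal (∫ t in Ioi 0, t ^ (α * q + b) * (1 + t) ^ (-(γ * q))) ^ (1 / q)
  have hC : C ≠ ⊤ := ENNReal.rpow_ne_top_of_nonneg (by positivity) ofReal_ne_top
  refine ⟨C, hC, fun f hf => ?_⟩
  set G : ℝ → ℝ → ℝ≥0∞ := fun x y => ‖f y‖ₑ * ‖x ^ α * (y ^ β / (x + y) ^ γ)‖ₑ
  have hG : Measurable (uncurry G) := by fun_prop
  have hG_norm : ∀ y ∈ Ioi (0:ℝ),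
      (∫⁻ x, G x y ^ q ∂wMeasure b) ^ (1 / q) = C * (ENNReal.ofReal (y ^ a) * ‖f y‖ₑ) := by
    intro y hy
    rw [ENNReal.lintegral_const_mul_rpow_one_div _ enorm_ne_top _ hq0,
      lintegral_enorm_kernel_rpow_wMeasure hq0 e hs hsr hy]
    ring
  rw [eLpNorm_eq_lintegral_rpow_enorm_toReal (by simpa using hq0) ofReal_ne_top,
    toReal_ofReal hq0.le, eLpNorm_one_eq_lintegral_enorm, lintegral_wMeasure a]
  calc (∫⁻ x, ‖Hop α β γ f x‖ₑ ^ q ∂wMeasure b) ^ (1 / q)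
      ≤ (∫⁻ x, (∫⁻ y in Ioi 0, G x y) ^ q ∂wMeasure b) ^ (1 / q) := by
        gcongr with x
        exact enorm_Hop_le α β γ f x
    _ ≤ ∫⁻ y in Ioi 0, (∫⁻ x, G x y ^ q ∂wMeasure b) ^ (1 / q) :=
        ENNReal.lintegral_Lp_lintegral_le hG hq
    _ = ∫⁻ y in Ioi 0, C * (ENNReal.ofReal (y ^ a) * ‖f y‖ₑ) :=
        setLIntegral_congr_fun measurableSet_Ioi hG_norm
    _ = C * ∫⁻ y in Ioi 0, ENNReal.ofReal (y ^ a) * ‖f y‖ₑ := lintegral_const_mul' _ _ hC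

theorem stmt_10 (a b q α β γ : ℝ) (ha : -1 < a) (hb : -1 < b) (hq : 1 ≤ q)
    (hγ : γ = α + β - a + (b + 1) / q)
    (h1 : β + 1 - γ < a + 1) (h2 : a + 1 < β + 1) :
    ∃ C : ℝ≥0∞, C ≠ ⊤ ∧ ∀ f : ℝ → ℝ, Measurable f →
      eLpNorm (Hop α β γ f) (ENNReal.ofReal q) (wMeasure b)
        ≤ C * eLpNorm f 1 (wMeasure a) :=
  stmt_10_general a b q α β γ hq hγ h1 h2
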